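/- arXiv:1905.09585 — 5 statements merged into one kernel-verified Lean document; each statement's English description precedes it below -/
import Mathlib

section
/- Let S be a real m×m matrix and K = [[S*, Sᵀ],[S, S*]]. If (a₁, a₂) ∈ ℝ^{2m} is an eigenvector of K with eigenvalue λ ≠ 0, then |a₁| = |a₂|. -/
open Matrix

/-- The block matrix K = [[S*, Sᵀ],[S, S*]] built from a square matrix S,
where S* = (S + Sᵀ)/2 is the symmetric part. -/
noncomputable def Kmat {m : ℕ} (S : Matrix (Fin m) (Fin m) ℝ) :
    Matrix (Fin m ⊕ Fin m) (Fin m ⊕ Fin m) ℝ :=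
  Matrix.fromBlocks ((1 / 2 : ℝ) • (S + Sᵀ)) Sᵀ S ((1 / 2 : ℝ) • (S + Sᵀ))

/-- Quadratic form of K evaluated on the concatenated vector (a₁, a₂). -/
noncomputable def quadK {m : ℕ} (S : Matrix (Fin m) (Fin m) ℝ)
    (a₁ a₂ : Fin m → ℝ) : ℝ :=
  Kmat S *ᵥ Sum.elim a₁ a₂ ⬝ᵥ Sum.elim a₁ a₂

/-- Euclidean norm of a vector in ℝᵐ. -/
noncomputable def vecEnorm {m : ℕ} (a : Fin m → ℝ) : ℝ :=
  Real.sqrt (a ⬝ᵥ a)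

/-!
Subtracting the two block rows of `K a = λ a` gives `λ (a₁ - a₂) = A (a₁ + a₂)` with
`A = (Sᵀ - S)/2` skew-symmetric. Pairing with `a₁ + a₂` turns the left side into
`λ (|a₁|² - |a₂|²)` and the right side into the quadratic form of a skew-symmetric matrix,
which vanishes.
-/

theorem Matrix.dotProduct_mulVec_self_eq_zero_of_transpose_eq_neg {n R : Type*} [Fintype n]
    [CommRing R] [NoZeroDivisors R] [CharZero R] {A : Matrix n n R} (hA : Aᵀ = -A)
    (x : n → R) : x ⬝ᵥ A *ᵥ x = 0 := by
  have h : x ⬝ᵥ A *ᵥ x = -(x ⬝ᵥ A *ᵥ x) := by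
    conv_lhs => rw [dotProduct_mulVec, ← mulVec_transpose, hA, dotProduct_comm]
    rw [neg_mulVec, dotProduct_neg]
  exact add_self_eq_zero.mp (eq_neg_iff_add_eq_zero.mp h)

theorem Kmat_mulVec_inl_sub_inr {m : ℕ} (S : Matrix (Fin m) (Fin m) ℝ) (a₁ a₂ : Fin m → ℝ) :
    (fun i ↦ (Kmat S *ᵥ Sum.elim a₁ a₂) (Sum.inl i) - (Kmat S *ᵥ Sum.elim a₁ a₂) (Sum.inr i)) =
      ((1 / 2 : ℝ) • (Sᵀ - S)) *ᵥ (a₁ + a₂) := by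
  ext i
  simp only [Kmat, fromBlocks_mulVec, Sum.elim_inl, Sum.elim_inr, Sum.elim_comp_inl,
    Sum.elim_comp_inr, Pi.add_apply]
  simp only [smul_mulVec, add_mulVec, sub_mulVec, mulVec_add, Pi.add_apply, Pi.sub_apply,
    Pi.smul_apply, smul_eq_mul]
  ring

theorem stmt4_general {m : ℕ} (S : Matrix (Fin m) (Fin m) ℝ) (a₁ a₂ : Fin m → ℝ)
    (lam : ℝ)
    (heig : Kmat S *ᵥ Sum.elim a₁ a₂ = lam • Sum.elim a₁ a₂)
    (hlam : lam ≠ 0) :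
    vecEnorm a₁ = vecEnorm a₂ := by
  have hskew : ((1 / 2 : ℝ) • (Sᵀ - S))ᵀ = -((1 / 2 : ℝ) • (Sᵀ - S)) := by
    rw [transpose_smul, transpose_sub, transpose_transpose, ← smul_neg, neg_sub]
  have hdiff : lam • (a₁ - a₂) = ((1 / 2 : ℝ) • (Sᵀ - S)) *ᵥ (a₁ + a₂) := by
    rw [← Kmat_mulVec_inl_sub_inr, heig]
    ext i
    simp [mul_sub]
  have hnorm : lam * (a₁ ⬝ᵥ a₁ - a₂ ⬝ᵥ a₂) = 0 := by
    have := congrArg ((a₁ + a₂) ⬝ᵥ ·) hdiff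
    simp only [dotProduct_mulVec_self_eq_zero_of_transpose_eq_neg hskew, dotProduct_smul,
      smul_eq_mul] at this
    rw [← this, add_dotProduct, dotProduct_sub, dotProduct_sub, dotProduct_comm a₂ a₁]
    ring
  rw [vecEnorm, vecEnorm, sub_eq_zero.mp ((mul_eq_zero.mp hnorm).resolve_left hlam)]

theorem stmt4 {m : ℕ} (S : Matrix (Fin m) (Fin m) ℝ) (a₁ a₂ : Fin m → ℝ)
    (lam : ℝ) (hv : Sum.elim a₁ a₂ ≠ 0)
    (heig : Kmat S *ᵥ Sum.elim a₁ a₂ = lam • Sum.elim a₁ a₂)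
    (hlam : lam ≠ 0) :
    vecEnorm a₁ = vecEnorm a₂ :=
  stmt4_general S a₁ a₂ lam heig hlam
end

section
/- Let S be a real m×m matrix and K = [[S*, Sᵀ],[S, S*]]. If (a₁, a₂) is an eigenvector of K with eigenvalue λ, then S a₁·a₁ = S a₂·a₂. -/
open Matrix

/-- Euclidean norm of a vector in ℝᵐ. -/
noncomputable def enorm {m : ℕ} (a : Fin m → ℝ) : ℝ :=
  Real.sqrt (a ⬝ᵥ a)

/-!
Pair the first eigen-equation `P a₁ + Sᵀ a₂ = λ a₁` with `a₂` and the second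
`S a₁ + P a₂ = λ a₂` with `a₁`. The right-hand sides both equal `λ a₁ ⬝ a₂`, and the
`P`-terms agree because `P` is symmetric; what remains is `Sᵀ a₂ ⬝ a₂ = S a₁ ⬝ a₁`,
and `Sᵀ a₂ ⬝ a₂ = S a₂ ⬝ a₂`.
-/

namespace Matrix

theorem fromBlocks_mulVec_sumElim_eq_smul_iff {l m α : Type*} [Fintype l] [Fintype m]
    [Semiring α] {A : Matrix l l α} {B : Matrix l m α} {C : Matrix m l α}
    {D : Matrix m m α} {x : l → α} {y : m → α} {c : α} :
    fromBlocks A B C D *ᵥ Sum.elim x y = c • Sum.elim x y ↔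
      A *ᵥ x + B *ᵥ y = c • x ∧ C *ᵥ x + D *ᵥ y = c • y := by
  simp only [fromBlocks_mulVec, Sum.elim_comp_inl, Sum.elim_comp_inr, funext_iff, Sum.forall,
    Pi.add_apply, Pi.smul_apply, Sum.elim_inl, Sum.elim_inr]

section CommRing

variable {n R : Type*} [Fintype n] [CommRing R]

theorem transpose_mulVec_dotProduct (A : Matrix n n R) (x y : n → R) :
    Aᵀ *ᵥ x ⬝ᵥ y = A *ᵥ y ⬝ᵥ x := by
  rw [dotProduct_comm, dotProduct_mulVec, vecMul_transpose]

theorem IsSymm.mulVec_dotProduct_comm {P : Matrix n n R} (hP : P.IsSymm) (x y : n → R) :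
    P *ᵥ x ⬝ᵥ y = P *ᵥ y ⬝ᵥ x := by
  rw [← transpose_mulVec_dotProduct, hP.eq]

theorem mulVec_dotProduct_self_eq_of_block_eigen {P S : Matrix n n R} (hP : P.IsSymm)
    {a₁ a₂ : n → R} {c : R} (h₁ : P *ᵥ a₁ + Sᵀ *ᵥ a₂ = c • a₁)
    (h₂ : S *ᵥ a₁ + P *ᵥ a₂ = c • a₂) :
    S *ᵥ a₁ ⬝ᵥ a₁ = S *ᵥ a₂ ⬝ᵥ a₂ := by
  have e₁ := congrArg (· ⬝ᵥ a₂) h₁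
  have e₂ := congrArg (· ⬝ᵥ a₁) h₂
  simp only [add_dotProduct, smul_dotProduct, smul_eq_mul] at e₁ e₂
  rw [transpose_mulVec_dotProduct, hP.mulVec_dotProduct_comm] at e₁
  linear_combination e₂ - e₁ - c * dotProduct_comm a₁ a₂

end CommRing

end Matrix

theorem stmt5_general {m : ℕ} (S : Matrix (Fin m) (Fin m) ℝ) (a₁ a₂ : Fin m → ℝ)
    (lam : ℝ)
    (heig : Kmat S *ᵥ Sum.elim a₁ a₂ = lam • Sum.elim a₁ a₂) :
    S *ᵥ a₁ ⬝ᵥ a₁ = S *ᵥ a₂ ⬝ᵥ a₂ := by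
  obtain ⟨h₁, h₂⟩ := fromBlocks_mulVec_sumElim_eq_smul_iff.mp heig
  exact mulVec_dotProduct_self_eq_of_block_eigen ((isSymm_add_transpose_self S).smul _) h₁ h₂

theorem stmt5 {m : ℕ} (S : Matrix (Fin m) (Fin m) ℝ) (a₁ a₂ : Fin m → ℝ)
    (lam : ℝ) (hv : Sum.elim a₁ a₂ ≠ 0)
    (heig : Kmat S *ᵥ Sum.elim a₁ a₂ = lam • Sum.elim a₁ a₂) :
    S *ᵥ a₁ ⬝ᵥ a₁ = S *ᵥ a₂ ⬝ᵥ a₂ :=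
  stmt5_general S a₁ a₂ lam heig
end

section
/- Let S be a real m×m matrix that is NOT symmetric. Then there exist a₁, a₂ ∈ ℝᵐ with |a₁| = |a₂| = 1 such that K(a₁,a₂)·(a₁,a₂) < 0, where K = [[S*, Sᵀ],[S, S*]]. In particular K has a negative eigenvalue. -/
open Matrix

/-- Euclidean norm of a vector in ℝᵐ. -/
noncomputable def enorm₂ {m : ℕ} (a : Fin m → ℝ) : ℝ :=
  Real.sqrt (a ⬝ᵥ a)

/-!
With A = S - Sᵀ ≠ 0 skew, pick v with w := A v ≠ 0; then v ⊥ w, so v + t w and t w - v have the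
same length. Writing quadK S a₁ a₂ = ⟨S(a₁ + a₂), a₁ + a₂⟩ + ⟨A a₁, a₂⟩, the value at this pair is
4⟨Sw, w⟩ t² + 2|w|² t, a quadratic with positive discriminant, hence negative for some t.
Normalising gives unit vectors, and a negative value of the quadratic form of the symmetric
matrix K forces a negative eigenvalue.
-/

section SkewPart

variable {n R : Type*} [Fintype n] [CommRing R] (S : Matrix n n R)

lemma sub_transpose_mulVec_dotProduct_self (x : n → R) : ((S - Sᵀ) *ᵥ x) ⬝ᵥ x = 0 := by
  rw [sub_mulVec, sub_dotProduct, mulVec_transpose, ← dotProduct_mulVec, dotProduct_comm,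
    sub_self]

lemma sub_transpose_mulVec_dotProduct_comm (x y : n → R) :
    ((S - Sᵀ) *ᵥ x) ⬝ᵥ y = -(((S - Sᵀ) *ᵥ y) ⬝ᵥ x) := by
  simp only [sub_mulVec, sub_dotProduct, mulVec_transpose, ← dotProduct_mulVec]
  rw [dotProduct_comm x, dotProduct_comm y]
  ring

end SkewPart

section QuadK

variable {m : ℕ} (S : Matrix (Fin m) (Fin m) ℝ)

lemma quadK_eq (a₁ a₂ : Fin m → ℝ) :
    quadK S a₁ a₂ = (S *ᵥ (a₁ + a₂)) ⬝ᵥ (a₁ + a₂) + ((S - Sᵀ) *ᵥ a₁) ⬝ᵥ a₂ := by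
  simp only [quadK, Kmat, fromBlocks_mulVec, sumElim_dotProduct_sumElim, add_mulVec, smul_mulVec,
    sub_mulVec, mulVec_add, add_dotProduct, dotProduct_add, sub_dotProduct, smul_dotProduct,
    mulVec_transpose, ← dotProduct_mulVec, smul_eq_mul, Sum.elim_comp_inl, Sum.elim_comp_inr]
  rw [dotProduct_comm a₁ (S *ᵥ a₁), dotProduct_comm a₂ (S *ᵥ a₂), dotProduct_comm a₁ (S *ᵥ a₂),
    dotProduct_comm a₂ (S *ᵥ a₁)]
  ring

lemma quadK_smul (c : ℝ) (a₁ a₂ : Fin m → ℝ) :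
    quadK S (c • a₁) (c • a₂) = c ^ 2 * quadK S a₁ a₂ := by
  simp only [quadK_eq, ← smul_add, mulVec_smul, dotProduct_smul, smul_dotProduct, smul_eq_mul]
  ring

lemma quadK_add_smul_smul_sub (v w : Fin m → ℝ) (t : ℝ) :
    quadK S (v + t • w) (t • w - v) =
      4 * ((S *ᵥ w) ⬝ᵥ w) * (t * t) + 2 * (((S - Sᵀ) *ᵥ v) ⬝ᵥ w) * t := by
  have hsum : v + t • w + (t • w - v) = (2 * t) • w := by module
  rw [quadK_eq, hsum]
  simp only [mulVec_add, mulVec_smul, add_dotProduct, dotProduct_sub, dotProduct_smul,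
    smul_dotProduct, smul_eq_mul, sub_transpose_mulVec_dotProduct_self]
  rw [sub_transpose_mulVec_dotProduct_comm S w v]
  ring

end QuadK

lemma enorm₂_smul {m : ℕ} (c : ℝ) (a : Fin m → ℝ) : enorm₂ (c • a) = |c| * enorm₂ a := by
  rw [enorm₂, enorm₂, dotProduct_smul, smul_dotProduct, smul_eq_mul, smul_eq_mul, ← mul_assoc,
    Real.sqrt_mul (mul_self_nonneg c), Real.sqrt_mul_self_eq_abs]

lemma enorm₂_pos {m : ℕ} {a : Fin m → ℝ} (ha : a ≠ 0) : 0 < enorm₂ a :=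
  Real.sqrt_pos.mpr (dotProduct_star_self_pos_iff.mpr ha)

lemma exists_enorm₂_eq_one_quadK_neg {m : ℕ} {S : Matrix (Fin m) (Fin m) ℝ} {a₁ a₂ : Fin m → ℝ}
    (heq : a₁ ⬝ᵥ a₁ = a₂ ⬝ᵥ a₂) (hneg : quadK S a₁ a₂ < 0) :
    ∃ b₁ b₂ : Fin m → ℝ, enorm₂ b₁ = 1 ∧ enorm₂ b₂ = 1 ∧ quadK S b₁ b₂ < 0 := by
  have ha₁ : a₁ ≠ 0 := by
    rintro rfl
    obtain rfl : a₂ = 0 := dotProduct_self_eq_zero.mp (by rw [← heq, zero_dotProduct])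
    simp [quadK] at hneg
  have hpos := enorm₂_pos ha₁
  have h₂ : enorm₂ a₂ = enorm₂ a₁ := by rw [enorm₂, enorm₂, heq]
  refine ⟨(enorm₂ a₁)⁻¹ • a₁, (enorm₂ a₁)⁻¹ • a₂, ?_, ?_, ?_⟩
  · rw [enorm₂_smul, abs_inv, abs_of_pos hpos, inv_mul_cancel₀ hpos.ne']
  · rw [enorm₂_smul, h₂, abs_inv, abs_of_pos hpos, inv_mul_cancel₀ hpos.ne']
  · rw [quadK_smul]
    exact mul_neg_of_pos_of_neg (by positivity) hneg

lemma exists_quadK_neg_of_transpose_ne {m : ℕ} {S : Matrix (Fin m) (Fin m) ℝ} (hS : Sᵀ ≠ S) :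
    ∃ a₁ a₂ : Fin m → ℝ, a₁ ⬝ᵥ a₁ = a₂ ⬝ᵥ a₂ ∧ quadK S a₁ a₂ < 0 := by
  obtain ⟨v, hv⟩ : ∃ v, (S - Sᵀ) *ᵥ v ≠ 0 := by
    simpa [ext_iff_mulVec, sub_mulVec, sub_eq_zero, eq_comm] using hS
  set w := (S - Sᵀ) *ᵥ v
  have hvw : w ⬝ᵥ v = 0 := sub_transpose_mulVec_dotProduct_self S v
  obtain ⟨t, ht⟩ : ∃ t : ℝ, quadK S (v + t • w) (t • w - v) < 0 := by
    by_contra! h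
    have hdiscr := discrim_le_zero (c := (0 : ℝ)) fun t => by
      simpa [quadK_add_smul_smul_sub] using h t
    have hw : 0 < w ⬝ᵥ w := dotProduct_star_self_pos_iff.mpr hv
    rw [discrim] at hdiscr
    nlinarith
  refine ⟨v + t • w, t • w - v, ?_, ht⟩
  simp only [add_dotProduct, sub_dotProduct, dotProduct_add, dotProduct_sub, smul_dotProduct,
    dotProduct_smul, smul_eq_mul, dotProduct_comm v w, hvw]
  ring

lemma isHermitian_Kmat {m : ℕ} (S : Matrix (Fin m) (Fin m) ℝ) : (Kmat S).IsHermitian := by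
  have hsym : ((1 / 2 : ℝ) • (S + Sᵀ)).IsHermitian := by
    simp [IsHermitian, conjTranspose_eq_transpose_of_trivial, add_comm]
  exact hsym.fromBlocks (by simp) hsym

lemma Matrix.IsHermitian.exists_neg_eigenvalue {n : Type*} [Fintype n] [DecidableEq n]
    {A : Matrix n n ℝ} (hA : A.IsHermitian) {x : n → ℝ} (hx : (A *ᵥ x) ⬝ᵥ x < 0) :
    ∃ (lam : ℝ) (v : n → ℝ), lam < 0 ∧ v ≠ 0 ∧ A *ᵥ v = lam • v := by
  obtain ⟨i, hi⟩ : ∃ i, hA.eigenvalues i < 0 := by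
    by_contra! h
    have hx' := (hA.posSemidef_iff_eigenvalues_nonneg.mpr h).dotProduct_mulVec_nonneg x
    rw [star_trivial, dotProduct_comm] at hx'
    exact hx'.not_gt hx
  exact ⟨_, _, hi, (WithLp.ofLp_eq_zero 2).ne.mpr (hA.eigenvectorBasis.orthonormal.ne_zero i),
    hA.mulVec_eigenvectorBasis i⟩

theorem stmt8 {m : ℕ} (S : Matrix (Fin m) (Fin m) ℝ) (hns : Sᵀ ≠ S) :
    (∃ a₁ a₂ : Fin m → ℝ, enorm₂ a₁ = 1 ∧ enorm₂ a₂ = 1 ∧ quadK S a₁ a₂ < 0) ∧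
    (∃ (lam : ℝ) (v : Fin m ⊕ Fin m → ℝ), lam < 0 ∧ v ≠ 0 ∧
      Kmat S *ᵥ v = lam • v) := by
  obtain ⟨a₁, a₂, heq, hneg⟩ := exists_quadK_neg_of_transpose_ne hns
  exact ⟨exists_enorm₂_eq_one_quadK_neg heq hneg, (isHermitian_Kmat S).exists_neg_eigenvalue hneg⟩
end

section
/- Let S be a real m×m matrix. If every eigenvector a of SᵀS with positive eigenvalue λ² satisfies S a = λ a (where λ = |Sa| > 0), and SᵀS a = 0 implies S a = 0, then S is symmetric. -/
open Matrix

/-!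
SᵀS is positive semidefinite, so it has an orthonormal eigenbasis with eigenvalues μᵢ ≥ 0.
The hypotheses say that S maps each of these eigenvectors to √μᵢ times itself, so S is
diagonal with real entries in an orthonormal basis, hence symmetric.
-/

theorem LinearMap.isSymmetric_of_apply_orthonormalBasis_eq_smul {𝕜 E ι : Type*} [RCLike 𝕜]
    [NormedAddCommGroup E] [InnerProductSpace 𝕜 E] [Fintype ι] (T : E →ₗ[𝕜] E)
    (b : OrthonormalBasis ι 𝕜 E) (μ : ι → ℝ) (hT : ∀ i, T (b i) = (μ i : 𝕜) • b i) :
    T.IsSymmetric := by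
  have hforms : (innerₛₗ 𝕜).comp T = (innerₛₗ 𝕜).compl₂ T := by
    refine LinearMap.ext_basis b.toBasis b.toBasis fun i j => ?_
    simp only [LinearMap.comp_apply, LinearMap.compl₂_apply, innerₛₗ_apply_apply,
      OrthonormalBasis.coe_toBasis, hT, inner_smul_left, inner_smul_right, RCLike.conj_ofReal]
    by_cases hij : i = j
    · rw [hij]
    · simp only [b.orthonormal.2 hij, mul_zero]
  intro x y
  exact LinearMap.congr_fun₂ hforms x y

theorem Matrix.isHermitian_of_mulVec_orthonormalBasis_eq_smul {𝕜 n : Type*} [RCLike 𝕜]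
    [Fintype n] [DecidableEq n] (A : Matrix n n 𝕜) (b : OrthonormalBasis n 𝕜 (EuclideanSpace 𝕜 n))
    (μ : n → ℝ) (hA : ∀ i, A *ᵥ ⇑(b i) = (μ i : 𝕜) • ⇑(b i)) : A.IsHermitian :=
  isSymmetric_toEuclideanLin_iff.mp <|
    LinearMap.isSymmetric_of_apply_orthonormalBasis_eq_smul _ b μ fun i => by
      rw [toLpLin_apply, hA]
      rfl

theorem Matrix.mulVec_eq_sqrt_smul_of_transpose_mul_self_mulVec {m : Type*} [Fintype m]
    {S : Matrix m m ℝ}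
    (hpos : ∀ (lam : ℝ) (a : m → ℝ), 0 < lam → (Sᵀ * S) *ᵥ a = (lam ^ 2) • a → S *ᵥ a = lam • a)
    (hker : ∀ a : m → ℝ, (Sᵀ * S) *ᵥ a = 0 → S *ᵥ a = 0)
    {μ : ℝ} (hμ : 0 ≤ μ) {a : m → ℝ} (ha : (Sᵀ * S) *ᵥ a = μ • a) :
    S *ᵥ a = √μ • a := by
  rcases hμ.lt_or_eq with hμ_pos | rfl
  · exact hpos _ _ (Real.sqrt_pos.mpr hμ_pos) (by rwa [Real.sq_sqrt hμ])
  · rw [Real.sqrt_zero, zero_smul]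
    exact hker a (by rw [ha, zero_smul])

theorem stmt10 {m : ℕ} (S : Matrix (Fin m) (Fin m) ℝ)
    (hpos : ∀ (lam : ℝ) (a : Fin m → ℝ), 0 < lam →
      (Sᵀ * S) *ᵥ a = (lam ^ 2) • a → S *ᵥ a = lam • a)
    (hker : ∀ a : Fin m → ℝ, (Sᵀ * S) *ᵥ a = 0 → S *ᵥ a = 0) :
    Sᵀ = S := by
  have hpsd : (Sᵀ * S).PosSemidef := by
    simpa only [conjTranspose_eq_transpose_of_trivial] using posSemidef_conjTranspose_mul_self S
  have hS : S.IsHermitian :=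
    isHermitian_of_mulVec_orthonormalBasis_eq_smul S hpsd.isHermitian.eigenvectorBasis
      (fun i => √(hpsd.isHermitian.eigenvalues i)) fun i =>
        mulVec_eq_sqrt_smul_of_transpose_mul_self_mulVec hpos hker (hpsd.eigenvalues_nonneg i)
          (hpsd.isHermitian.mulVec_eigenvectorBasis i)
  simpa only [IsHermitian, conjTranspose_eq_transpose_of_trivial] using hS
end

section
/- For the Heisenberg system in ℝ³ with σ(x,y,z) having columns σ₁ = (1,0,y), σ₂ = (0,1,−x), and u(x,y,z) = (x²+y²+z²)/2: at points (0,0,z), the row vector ∇u σ vanishes, the 2×2 matrix S(0,0,z) = [[1, −z],[z, 1]], and at z = 1 the 4×4 matrix K(0,0,1) = [[1,0,1,1],[0,1,−1,1],[1,−1,1,0],[1,1,0,1]] has minimal eigenvalue 1 − √2 < 0 with eigenvector (−√2/2, √2/2, 1, 0). -/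
open Matrix

/-- The gradient of u : ℝⁿ → ℝ, as a vector. -/
noncomputable def gradv {n : ℕ} (u : (Fin n → ℝ) → ℝ) (x : Fin n → ℝ) :
    Fin n → ℝ :=
  fun i => fderiv ℝ u x (Pi.single i 1)

/-- The row vector ∇u σ, i.e. x ↦ σ(x)ᵀ ∇u(x) ∈ ℝᵐ. -/
noncomputable def gradSigma {n m : ℕ} (σ : (Fin n → ℝ) → Matrix (Fin n) (Fin m) ℝ)
    (u : (Fin n → ℝ) → ℝ) (x : Fin n → ℝ) : Fin m → ℝ :=
  (σ x)ᵀ *ᵥ gradv u x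

/-- The m×n Jacobian of x ↦ σ(x)ᵀ ∇u(x). -/
noncomputable def jacGradSigma {n m : ℕ} (σ : (Fin n → ℝ) → Matrix (Fin n) (Fin m) ℝ)
    (u : (Fin n → ℝ) → ℝ) (x : Fin n → ℝ) : Matrix (Fin m) (Fin n) ℝ :=
  Matrix.of fun i k => fderiv ℝ (fun y => gradSigma σ u y i) x (Pi.single k 1)

/-- The matrix S(x) = σ(x)ᵀ (D(∇u σ)(x))ᵀ. -/
noncomputable def Smat {n m : ℕ} (σ : (Fin n → ℝ) → Matrix (Fin n) (Fin m) ℝ)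
    (u : (Fin n → ℝ) → ℝ) (x : Fin n → ℝ) : Matrix (Fin m) (Fin m) ℝ :=
  (σ x)ᵀ * (jacGradSigma σ u x)ᵀ

/-- The Heisenberg system: columns σ₁ = (1,0,y), σ₂ = (0,1,−x). -/
noncomputable def sigHeis : (Fin 3 → ℝ) → Matrix (Fin 3) (Fin 2) ℝ :=
  fun p => !![1, 0; 0, 1; p 1, -(p 0)]

/-- u(x,y,z) = (x² + y² + z²)/2. -/
noncomputable def uHeis : (Fin 3 → ℝ) → ℝ :=
  fun p => (p 0 ^ 2 + p 1 ^ 2 + p 2 ^ 2) / 2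

/-! With `u = |p|²/2` we have `∇u(p) = p`, so `∇u σ = (x + zy, y − zx)` and its Jacobian at
`(0,0,z)` gives `S = [[1, −z], [z, 1]]`. This `S` has symmetric part `1` and satisfies
`SᵀS = SSᵀ = (1 + z²) • 1`, so `K − 1 = [[0, Sᵀ], [S, 0]]` squares to `(1 + z²) • 1`. Every
eigenvalue `λ` of `K` therefore has `(λ − 1)² = 1 + z²`, i.e. `λ ≥ 1 − √(1 + z²)`. -/

theorem fderiv_apply_coord {ι : Type*} [Fintype ι] (i : ι) (x : ι → ℝ) :
    fderiv ℝ (fun y : ι → ℝ => y i) x = ContinuousLinearMap.proj i :=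
  (hasFDerivAt_apply i x).fderiv

theorem gradv_half_sum_sq {n : ℕ} (x : Fin n → ℝ) :
    gradv (fun p => (∑ i, p i ^ 2) / 2) x = x := by
  ext i
  simp (disch := fun_prop) [gradv, div_eq_mul_inv, fderiv_mul_const, fderiv_fun_sum,
    fderiv_fun_pow, fderiv_apply_coord, Pi.single_apply]
  ring

theorem gradv_uHeis (x : Fin 3 → ℝ) : gradv uHeis x = x := by
  have : uHeis = fun p => (∑ i, p i ^ 2) / 2 := by
    ext p; simp [uHeis, Fin.sum_univ_three]
  rw [this, gradv_half_sum_sq]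

theorem gradSigma_sigHeis_uHeis (y : Fin 3 → ℝ) :
    gradSigma sigHeis uHeis y = ![y 0 + y 2 * y 1, y 1 - y 2 * y 0] := by
  ext i
  fin_cases i <;>
    simp [gradSigma, gradv_uHeis, sigHeis, mulVec, dotProduct, Fin.sum_univ_three] <;> ring

theorem jacGradSigma_sigHeis_uHeis (x : Fin 3 → ℝ) :
    jacGradSigma sigHeis uHeis x = !![1, x 2, x 1; -x 2, 1, -x 0] := by
  ext i k
  fin_cases i <;> fin_cases k <;>
    simp (disch := fun_prop) [jacGradSigma, gradSigma_sigHeis_uHeis, fderiv_fun_add,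
      fderiv_fun_sub, fderiv_fun_mul, fderiv_apply_coord, Pi.single_apply]

theorem Smat_sigHeis_uHeis_vertical (z : ℝ) :
    Smat sigHeis uHeis ![0, 0, z] = !![1, -z; z, 1] := by
  ext i j
  fin_cases i <;> fin_cases j <;>
    simp [Smat, jacGradSigma_sigHeis_uHeis, sigHeis, mul_apply, Fin.sum_univ_three]

theorem Kmat_sub_one_mul_self {m : ℕ} {S : Matrix (Fin m) (Fin m) ℝ} {c : ℝ}
    (hS : (1 / 2 : ℝ) • (S + Sᵀ) = 1) (hSS : Sᵀ * S = c • 1) (hSS' : S * Sᵀ = c • 1) :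
    (Kmat S - 1) * (Kmat S - 1) = c • 1 := by
  have hK : Kmat S = fromBlocks 0 Sᵀ S 0 + 1 := by
    rw [Kmat, hS, ← fromBlocks_one, fromBlocks_add]
    simp
  rw [hK, add_sub_cancel_right, fromBlocks_multiply, hSS, hSS', ← fromBlocks_one,
    fromBlocks_smul]
  simp

theorem sq_eq_of_mul_self_eq_smul_one {ι K : Type*} [Fintype ι] [DecidableEq ι] [Field K]
    {M : Matrix ι ι K} {c μ : K} (hM : M * M = c • 1) {v : ι → K} (hv : v ≠ 0)
    (h : M *ᵥ v = μ • v) : μ ^ 2 = c := by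
  have : (μ ^ 2) • v = c • v := calc
    (μ ^ 2) • v = M *ᵥ (M *ᵥ v) := by rw [h, mulVec_smul, h, smul_smul, sq]
    _ = c • v := by rw [mulVec_mulVec, hM, smul_mulVec, one_mulVec]
  exact smul_left_injective K hv this

theorem one_sub_sqrt_le_of_Kmat_mulVec_eq_smul {m : ℕ} {S : Matrix (Fin m) (Fin m) ℝ} {c : ℝ}
    (hS : (1 / 2 : ℝ) • (S + Sᵀ) = 1) (hSS : Sᵀ * S = c • 1) (hSS' : S * Sᵀ = c • 1)
    {v : Fin m ⊕ Fin m → ℝ} (hv : v ≠ 0) {μ : ℝ} (h : Kmat S *ᵥ v = μ • v) :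
    1 - Real.sqrt c ≤ μ := by
  have hμ : (μ - 1) ^ 2 = c := by
    refine sq_eq_of_mul_self_eq_smul_one (Kmat_sub_one_mul_self hS hSS hSS') hv ?_
    rw [sub_mulVec, h, one_mulVec, sub_smul, one_smul]
  have := neg_abs_le (μ - 1)
  rw [← Real.sqrt_sq_eq_abs, hμ] at this
  linarith

theorem Kmat_rotation (z : ℝ) :
    Kmat !![1, -z; z, 1] = fromBlocks 1 !![1, z; -z, 1] !![1, -z; z, 1] 1 := by
  have hT : !![1, -z; z, 1]ᵀ = !![1, z; -z, 1] := by
    ext i j; fin_cases i <;> fin_cases j <;> simp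
  have hS : (1 / 2 : ℝ) • (!![1, -z; z, 1] + !![1, z; -z, 1]) = 1 := by
    ext i j; fin_cases i <;> fin_cases j <;> norm_num
  rw [Kmat, hT, hS]

theorem one_sub_sqrt_le_of_Kmat_rotation_mulVec_eq_smul {z μ : ℝ} {v : Fin 2 ⊕ Fin 2 → ℝ}
    (hv : v ≠ 0) (h : Kmat !![1, -z; z, 1] *ᵥ v = μ • v) : 1 - Real.sqrt (1 + z ^ 2) ≤ μ := by
  refine one_sub_sqrt_le_of_Kmat_mulVec_eq_smul ?_ ?_ ?_ hv h <;>
    ext i j <;> fin_cases i <;> fin_cases j <;> simp [mul_apply] <;> ring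

theorem stmt19 :
    (∀ z : ℝ, gradSigma sigHeis uHeis ![0, 0, z] = 0) ∧
    (∀ z : ℝ, Smat sigHeis uHeis ![0, 0, z] = !![1, -z; z, 1]) ∧
    Kmat (Smat sigHeis uHeis ![0, 0, 1]) =
      Matrix.fromBlocks !![1, 0; 0, 1] !![1, 1; -1, 1] !![1, -1; 1, 1]
        !![1, 0; 0, 1] ∧
    Kmat (Smat sigHeis uHeis ![0, 0, 1]) *ᵥ
        Sum.elim ![-(Real.sqrt 2 / 2), Real.sqrt 2 / 2] ![1, 0] =
      (1 - Real.sqrt 2) •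
        Sum.elim ![-(Real.sqrt 2 / 2), Real.sqrt 2 / 2] ![1, 0] ∧
    (1 - Real.sqrt 2 < 0) ∧
    (∀ lam : ℝ, (∃ v : Fin 2 ⊕ Fin 2 → ℝ, v ≠ 0 ∧
        Kmat (Smat sigHeis uHeis ![0, 0, 1]) *ᵥ v = lam • v) →
      1 - Real.sqrt 2 ≤ lam) := by
  have hK : Kmat (Smat sigHeis uHeis ![0, 0, 1]) =
      fromBlocks !![1, 0; 0, 1] !![1, 1; -1, 1] !![1, -1; 1, 1] !![1, 0; 0, 1] := by
    rw [Smat_sigHeis_uHeis_vertical, Kmat_rotation, one_fin_two]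
  refine ⟨fun z => ?_, Smat_sigHeis_uHeis_vertical, hK, ?_, sub_neg.2 Real.one_lt_sqrt_two,
    fun μ ⟨v, hv, h⟩ => ?_⟩
  · simp [gradSigma_sigHeis_uHeis]
  · have hsqrt : Real.sqrt 2 * Real.sqrt 2 = 2 := Real.mul_self_sqrt zero_le_two
    rw [hK]
    ext i; rcases i with i | i <;> fin_cases i <;>
      simp [mulVec, dotProduct, Fin.sum_univ_two, Fintype.sum_sum_type] <;> linarith
  · rw [Smat_sigHeis_uHeis_vertical] at h
    simpa [one_add_one_eq_two] using one_sub_sqrt_le_of_Kmat_rotation_mulVec_eq_smul hv h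
end
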